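/- (Regret of expected Follow-the-Perturbed-Leader.) Let K ⊆ ℝ^d be a nonempty convex compact set with ‖x‖ ≤ D for all x ∈ K, let δ > 0, let f₁, …, f_T : ℝ^d → ℝ be convex differentiable functions with ‖∇f_t(x)‖ ≤ G for all x ∈ K and all t, and let h_δ^*(y) = E_{v ~ μ_B}[M_K(y + v/δ)]. Suppose the points x₁, …, x_T ∈ K satisfy x_t = ∇h_δ^*(− Σ_{s=1}^{t−1} ∇f_s(x_s)) for each t (the expected FPL iterates). Then Σ_{t=1}^T f_t(x_t) − min_{x ∈ K} Σ_{t=1}^T f_t(x) ≤ 2D/δ + (δ d D/2) G² T. -/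

import Mathlib

open Set Metric MeasureTheory
open scoped RealInnerProductSpace

/-- The uniform probability measure on the closed unit ball of `ℝ^d`. -/
noncomputable def uniformBallMeasure (d : ℕ) : Measure (EuclideanSpace ℝ (Fin d)) :=
  (volume (Metric.closedBall (0 : EuclideanSpace ℝ (Fin d)) 1))⁻¹ •
    (volume.restrict (Metric.closedBall (0 : EuclideanSpace ℝ (Fin d)) 1))

/-- The support function `M_K(y) = sup_{x ∈ K} ⟨y, x⟩` of a set `K ⊆ ℝ^d`. -/
noncomputable def supportFn {d : ℕ} (K : Set (EuclideanSpace ℝ (Fin d)))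
    (y : EuclideanSpace ℝ (Fin d)) : ℝ :=
  sSup ((fun x => ⟪y, x⟫) '' K)

/-- The ball-smoothed support function `h_δ^*(y) = E_{v ~ μ_B}[M_K(y + v/δ)]`. -/
noncomputable def smoothedSupportFn {d : ℕ} (K : Set (EuclideanSpace ℝ (Fin d))) (δ : ℝ)
    (y : EuclideanSpace ℝ (Fin d)) : ℝ :=
  ∫ v, supportFn K (y + δ⁻¹ • v) ∂(uniformBallMeasure d)

/-!
`M_K` is `D`-Lipschitz, so `h_δ^*` stays within `D / δ` of `M_K`, and its derivative at `y` is
the average of `DM_K` over the ball `B(y, 1/δ)`. Two such balls differ by a set whose volume is at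
most `d ‖y₁ - y₂‖ δ / 2` times that of the ball, hence `∇h_δ^*` is `δ d D`-Lipschitz and
`h_δ^*` satisfies the descent inequality with constant `δ d D`.

By convexity the regret is at most the linear regret `∑ ⟪g_t, x_t - z⟫` with `g_t = ∇f_t(x_t)`.
Since `x_t = ∇h_δ^*(θ_t)` with `θ_t = -∑_{s<t} g_s`, the descent inequality between `θ_t` and
`θ_{t+1} = θ_t - g_t` gives `⟪g_t, x_t⟫ ≤ h_δ^*(θ_t) - h_δ^*(θ_{t+1}) + (δ d D / 2) ‖g_t‖²`.
Telescoping, the linear regret is at most `h_δ^*(0) - h_δ^*(θ_T) + ⟪θ_T, z⟫ + (δ d D / 2) G² T`,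
and `h_δ^*(0) ≤ D / δ`, `⟪θ_T, z⟫ ≤ M_K(θ_T) ≤ h_δ^*(θ_T) + D / δ`.
-/

open Measure Module
open scoped NNReal

section BallAverage

variable {E F : Type*} [NormedAddCommGroup E] [NormedSpace ℝ E] [MeasurableSpace E]
  [BorelSpace E] [FiniteDimensional ℝ E] [NormedAddCommGroup F] [NormedSpace ℝ F]
  (μ : Measure E) [μ.IsAddHaarMeasure]

theorem measureReal_closedBall_sdiff_closedBall_le (x y : E) {r : ℝ} (hr : 0 < r) :
    μ.real (closedBall x r \ closedBall y r) ≤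
      μ.real (closedBall x r) * (finrank ℝ E * dist x y / (2 * r)) := by
  set n := finrank ℝ E
  set u := dist x y
  rcases le_or_gt u (2 * r) with hu | hu
  · have hsub : closedBall (midpoint ℝ x y) (r - u / 2) ⊆ closedBall x r ∩ closedBall y r := by
      intro w hw
      rw [mem_closedBall] at hw
      have hx : dist (midpoint ℝ x y) x = u / 2 := by
        rw [dist_midpoint_left, Real.norm_two]; ring
      have hy : dist (midpoint ℝ x y) y = u / 2 := by
        rw [dist_midpoint_right, Real.norm_two]; ring
      constructor <;> rw [mem_closedBall]
      · linarith [dist_triangle w (midpoint ℝ x y) x]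
      · linarith [dist_triangle w (midpoint ℝ x y) y]
    have hinter := measureReal_mono (μ := μ) hsub
      (measure_ne_top_of_subset inter_subset_left measure_closedBall_lt_top.ne)
    have hsplit := measureReal_inter_add_sdiff (μ := μ) (s := closedBall x r)
      (measurableSet_closedBall (x := y) (ε := r)) measure_closedBall_lt_top.ne
    rw [addHaar_real_closedBall' μ _ (by linarith)] at hinter
    rw [addHaar_real_closedBall' μ _ hr.le] at hsplit ⊢
    have hbernoulli : r ^ n * (1 - n * u / (2 * r)) ≤ (r - u / 2) ^ n := by
      have h := one_add_mul_le_pow (a := -(u / (2 * r))) (by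
        have : u / (2 * r) ≤ 1 := (div_le_one (by positivity)).2 hu
        linarith) n
      have hpow : (r - u / 2) ^ n = r ^ n * (1 + -(u / (2 * r))) ^ n := by
        rw [← mul_pow]; congr 1; field_simp; ring
      rw [hpow]
      calc r ^ n * (1 - n * u / (2 * r)) = r ^ n * (1 + n * -(u / (2 * r))) := by ring
        _ ≤ _ := by gcongr
    have hB := measureReal_nonneg (μ := μ) (s := closedBall 0 1)
    nlinarith
  · have hxy : x ≠ y := fun h => by simp [u, h] at hu; linarith
    have : Nontrivial E := ⟨⟨x, y, hxy⟩⟩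
    have hn : (1 : ℝ) ≤ n := by exact_mod_cast finrank_pos (R := ℝ) (M := E)
    have hfrac : 1 ≤ n * u / (2 * r) := by
      rw [le_div_iff₀ (by positivity)]; nlinarith
    calc μ.real (closedBall x r \ closedBall y r) ≤ μ.real (closedBall x r) :=
          measureReal_mono sdiff_subset measure_closedBall_lt_top.ne
      _ ≤ _ := le_mul_of_one_le_right measureReal_nonneg hfrac

theorem setAverage_closedBall_comp_add_smul (g : E → F) (y : E) {r : ℝ} (hr : 0 < r) :
    ⨍ v in closedBall 0 1, g (y + r • v) ∂μ = ⨍ w in closedBall y r, g w ∂μ := by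
  have htrans : ∫ w in closedBall 0 r, g (y + w) ∂μ = ∫ w in closedBall y r, g w ∂μ := by
    have hpre : (y + ·) ⁻¹' closedBall y r = closedBall 0 r := by
      ext w; simp
    rw [← (measurePreserving_add_left μ y).setIntegral_preimage_emb
      (measurableEmbedding_addLeft y) g, hpre]
  rw [setAverage_eq, setAverage_eq, setIntegral_comp_smul_of_pos μ (fun w => g (y + w)) _ hr,
    smul_unitClosedBall_of_nonneg hr.le, htrans, smul_smul, addHaar_real_closedBall' μ y hr.le,
    mul_inv, mul_comm]

theorem norm_setIntegral_sub_setIntegral_le {α : Type*} [MeasurableSpace α] {ν : Measure α}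
    {g : α → F} {C : ℝ} (hg : ∀ w, ‖g w‖ ≤ C) (hgm : AEStronglyMeasurable g ν) {A B : Set α}
    (hA : MeasurableSet A) (hB : MeasurableSet B) (hAfin : ν A ≠ ⊤) (hBfin : ν B ≠ ⊤) :
    ‖∫ w in A, g w ∂ν - ∫ w in B, g w ∂ν‖ ≤ C * (ν.real (A \ B) + ν.real (B \ A)) := by
  have hint : ∀ s, ν s ≠ ⊤ → IntegrableOn g s ν := fun s hs =>
    (integrableOn_const hs).mono' hgm.restrict (ae_of_all _ hg)
  have hbound : ∀ s, ν s ≠ ⊤ → ‖∫ w in s, g w ∂ν‖ ≤ C * ν.real s := fun s hs =>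
    norm_setIntegral_le_of_norm_le_const hs.lt_top fun w _ => hg w
  have hcancel : ∫ w in A, g w ∂ν - ∫ w in B, g w ∂ν =
      ∫ w in A \ B, g w ∂ν - ∫ w in B \ A, g w ∂ν := by
    rw [← integral_inter_add_sdiff hB (hint A hAfin),
      ← integral_inter_add_sdiff hA (hint B hBfin), inter_comm]
    abel
  rw [hcancel, mul_add]
  exact (norm_sub_le _ _).trans (add_le_add
    (hbound _ (measure_ne_top_of_subset sdiff_subset hAfin))
    (hbound _ (measure_ne_top_of_subset sdiff_subset hBfin)))

theorem norm_setAverage_closedBall_sub_le {g : E → F} {C : ℝ} (hg : ∀ w, ‖g w‖ ≤ C)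
    (hgm : AEStronglyMeasurable g μ) (x y : E) {r : ℝ} (hr : 0 < r) :
    ‖⨍ w in closedBall x r, g w ∂μ - ⨍ w in closedBall y r, g w ∂μ‖ ≤
      C * finrank ℝ E * dist x y / r := by
  set A := closedBall x r
  set B := closedBall y r
  have hC : 0 ≤ C := (norm_nonneg _).trans (hg 0)
  have hAB : μ.real B = μ.real A := by
    rw [addHaar_real_closedBall' μ y hr.le, addHaar_real_closedBall' μ x hr.le]
  have hAB_le : μ.real (A \ B) ≤ μ.real A * (finrank ℝ E * dist x y / (2 * r)) :=
    measureReal_closedBall_sdiff_closedBall_le μ x y hr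
  have hBA_le : μ.real (B \ A) ≤ μ.real A * (finrank ℝ E * dist x y / (2 * r)) := by
    rw [← hAB, dist_comm]
    exact measureReal_closedBall_sdiff_closedBall_le μ y x hr
  have hdiff : ‖∫ w in A, g w ∂μ - ∫ w in B, g w ∂μ‖ ≤
      μ.real A * (C * finrank ℝ E * dist x y / r) :=
    calc _ ≤ C * (μ.real (A \ B) + μ.real (B \ A)) :=
          norm_setIntegral_sub_setIntegral_le hg hgm measurableSet_closedBall
            measurableSet_closedBall measure_closedBall_lt_top.ne measure_closedBall_lt_top.ne
      _ ≤ C * (μ.real A * (finrank ℝ E * dist x y / (2 * r)) +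
          μ.real A * (finrank ℝ E * dist x y / (2 * r))) := by gcongr
      _ = μ.real A * (C * finrank ℝ E * dist x y / r) := by field_simp; ring
  rw [setAverage_eq, setAverage_eq, hAB, ← smul_sub, norm_smul, Real.norm_eq_abs,
    abs_inv, abs_of_nonneg measureReal_nonneg]
  calc (μ.real A)⁻¹ * ‖_‖ ≤ (μ.real A)⁻¹ * (μ.real A * (C * finrank ℝ E * dist x y / r)) := by
        gcongr
    _ ≤ C * finrank ℝ E * dist x y / r := by
        rw [← mul_assoc]
        exact mul_le_of_le_one_left (by positivity)
          (inv_mul_le_one_of_le₀ le_rfl measureReal_nonneg)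

end BallAverage

theorem LipschitzWith.hasFDerivAt_integral_comp_add_smul {E F : Type*}
    [NormedAddCommGroup E] [NormedSpace ℝ E] [MeasurableSpace E] [BorelSpace E]
    [FiniteDimensional ℝ E] [NormedAddCommGroup F] [NormedSpace ℝ F] [FiniteDimensional ℝ F]
    {μ ν : Measure E} [IsFiniteMeasure μ] [ν.IsAddHaarMeasure] (hμν : μ ≪ ν)
    {g : E → F} {C : ℝ≥0} (hg : LipschitzWith C g) {c : ℝ} (hc : c ≠ 0) {y : E}
    (hint : Integrable (fun v => g (y + c • v)) μ) :
    HasFDerivAt (fun y => ∫ v, g (y + c • v) ∂μ) (∫ v, fderiv ℝ g (y + c • v) ∂μ) y := by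
  have hshift : Continuous fun v : E => y + c • v := continuous_const.add (continuous_const_smul c)
  -- Rademacher's theorem, transported along the non-degenerate affine map `v ↦ y + c • v`
  have hdiff : ∀ᵐ v ∂μ, DifferentiableAt ℝ g (y + c • v) := by
    have hqmp : QuasiMeasurePreserving (fun v : E => y + c • v) ν ν :=
      (measurePreserving_add_left ν y).quasiMeasurePreserving.comp
        (quasiMeasurePreserving_smul ν hc)
    exact hμν.ae_le (hqmp.ae hg.ae_differentiableAt)
  refine (hasFDerivAt_integral_of_dominated_loc_of_lip (F := fun x v => g (x + c • v))
    (F' := fun v => fderiv ℝ g (y + c • v)) (bound := fun _ => (C : ℝ)) Filter.univ_mem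
    (Filter.Eventually.of_forall fun x => (hg.continuous.comp
      (continuous_const.add (continuous_const_smul c) : Continuous fun v : E => x + c • v)).aestronglyMeasurable)
    hint ((measurable_fderiv ℝ g).comp hshift.measurable).aestronglyMeasurable
    (ae_of_all _ fun v => ?_) (integrable_const _) ?_).2
  · rw [Real.nnabs_coe, lipschitzOnWith_univ]
    have htrans : LipschitzWith 1 fun x : E => x + c • v :=
      LipschitzWith.of_dist_le_mul fun a b => by simp
    simpa [Function.comp_def] using hg.comp htrans
  · filter_upwards [hdiff] with v hv
    exact hv.hasFDerivAt.comp y ((hasFDerivAt_id y).add_const _)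

section Calculus

variable {E : Type*} [NormedAddCommGroup E] [NormedSpace ℝ E] {f : E → ℝ}

theorem ConvexOn.add_fderiv_sub_le (hf : ConvexOn ℝ univ f) {x : E}
    (hx : DifferentiableAt ℝ f x) (z : E) : f x + fderiv ℝ f x (z - x) ≤ f z := by
  have hline : ConvexOn ℝ univ (f ∘ (AffineMap.lineMap x z : ℝ →ᵃ[ℝ] E)) := by
    simpa using hf.comp_affineMap (AffineMap.lineMap x z)
  have hderiv : HasDerivAt (f ∘ (AffineMap.lineMap x z : ℝ →ᵃ[ℝ] E)) (fderiv ℝ f x (z - x)) 0 :=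
    hx.hasFDerivAt.comp_hasDerivAt_of_eq 0 AffineMap.hasDerivAt_lineMap
      (AffineMap.lineMap_apply_zero x z).symm
  have := hline.le_slope_of_hasDerivAt (mem_univ 0) (mem_univ 1) zero_lt_one hderiv
  simp [slope_def_field] at this
  linarith [(fderiv ℝ f x).map_sub z x]

theorem le_add_fderiv_sub_add_sq_of_lipschitz_fderiv (hf : Differentiable ℝ f) {L : ℝ}
    (hL : ∀ a b, ‖fderiv ℝ f a - fderiv ℝ f b‖ ≤ L * ‖a - b‖) (a b : E) :
    f b ≤ f a + fderiv ℝ f a (b - a) + L / 2 * ‖b - a‖ ^ 2 := by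
  set u := b - a
  set φ : ℝ → ℝ := fun t => f (a + t • u) - t * fderiv ℝ f a u - L / 2 * ‖u‖ ^ 2 * t ^ 2
  have hφ : ∀ t, HasDerivAt φ
      (fderiv ℝ f (a + t • u) u - fderiv ℝ f a u - L * ‖u‖ ^ 2 * t) t := by
    intro t
    have hline : HasDerivAt (fun t : ℝ => a + t • u) u t := by
      simpa using ((hasDerivAt_id t).smul_const u).const_add a
    refine ((((hf _).hasFDerivAt.comp_hasDerivAt t hline).sub
      ((hasDerivAt_id t).mul_const (fderiv ℝ f a u))).sub
      (((hasDerivAt_id t).pow 2).const_mul (L / 2 * ‖u‖ ^ 2))).congr_deriv ?_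
    simp only [id, one_mul]
    ring
  have hanti : AntitoneOn φ (Icc 0 1) := by
    refine antitoneOn_of_hasDerivWithinAt_nonpos (convex_Icc 0 1)
      (HasDerivAt.continuousOn fun t _ => hφ t) (fun t _ => (hφ t).hasDerivWithinAt) ?_
    intro t ht
    rw [interior_Icc] at ht
    have hslope : (fderiv ℝ f (a + t • u) - fderiv ℝ f a) u ≤ L * ‖u‖ ^ 2 * t :=
      calc _ ≤ ‖fderiv ℝ f (a + t • u) - fderiv ℝ f a‖ * ‖u‖ :=
            (Real.le_norm_self _).trans (ContinuousLinearMap.le_opNorm _ _)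
        _ ≤ L * ‖a + t • u - a‖ * ‖u‖ := by gcongr; exact hL _ _
        _ = L * ‖u‖ ^ 2 * t := by
          rw [add_sub_cancel_left, norm_smul, Real.norm_of_nonneg ht.1.le]; ring
    simp only [_root_.sub_apply] at hslope
    linarith
  have := hanti (left_mem_Icc.2 zero_le_one) (right_mem_Icc.2 zero_le_one) zero_le_one
  simp only [φ, zero_smul, add_zero, one_smul, zero_mul, sub_zero, one_mul, one_pow, ne_eq,
    OfNat.ofNat_ne_zero, not_false_eq_true, zero_pow, mul_zero, u, add_sub_cancel] at this
  linarith

end Calculus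

/-- Dual averaging against the linear losses `⟪g t, ·⟫`: summing the descent inequality of `h`
between consecutive points `-∑ s ∈ range t, g s` telescopes. -/
theorem sum_inner_gradient_sub_le_of_descent {E : Type*} [NormedAddCommGroup E]
    [InnerProductSpace ℝ E] [CompleteSpace E] {h : E → ℝ} {L : ℝ}
    (hdesc : ∀ a b, h b ≤ h a + ⟪gradient h a, b - a⟫ + L / 2 * ‖b - a‖ ^ 2)
    (g : ℕ → E) (z : E) (T : ℕ) :
    ∑ t ∈ Finset.range T, ⟪g t, gradient h (-∑ s ∈ Finset.range t, g s) - z⟫ ≤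
      h 0 - h (-∑ s ∈ Finset.range T, g s) - ⟪∑ s ∈ Finset.range T, g s, z⟫ +
        L / 2 * ∑ t ∈ Finset.range T, ‖g t‖ ^ 2 := by
  induction T with
  | zero => simp
  | succ T ih =>
    set θ := -∑ s ∈ Finset.range T, g s
    have hstep := hdesc θ (θ - g T)
    rw [sub_sub_cancel_left, norm_neg, inner_neg_right, real_inner_comm] at hstep
    simp only [Finset.sum_range_succ, neg_add, ← sub_eq_add_neg, inner_add_left,
      inner_sub_right] at ih ⊢
    linarith

section SupportFunction

variable {d : ℕ} {K : Set (EuclideanSpace ℝ (Fin d))} {D : ℝ}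

theorem inner_le_supportFn (hD : ∀ x ∈ K, ‖x‖ ≤ D) {x : EuclideanSpace ℝ (Fin d)} (hx : x ∈ K)
    (y : EuclideanSpace ℝ (Fin d)) : ⟪y, x⟫ ≤ supportFn K y := by
  refine le_csSup ⟨‖y‖ * D, ?_⟩ ⟨x, hx, rfl⟩
  rintro _ ⟨w, hw, rfl⟩
  exact (real_inner_le_norm y w).trans (by gcongr; exact hD w hw)

theorem supportFn_le_add (hKne : K.Nonempty) (hD : ∀ x ∈ K, ‖x‖ ≤ D)
    (y₁ y₂ : EuclideanSpace ℝ (Fin d)) : supportFn K y₁ ≤ supportFn K y₂ + D * ‖y₁ - y₂‖ := by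
  refine csSup_le (hKne.image _) ?_
  rintro _ ⟨x, hx, rfl⟩
  calc ⟪y₁, x⟫ = ⟪y₂, x⟫ + ⟪y₁ - y₂, x⟫ := by rw [inner_sub_left]; ring
    _ ≤ supportFn K y₂ + ‖y₁ - y₂‖ * D := by
      gcongr
      · exact inner_le_supportFn hD hx y₂
      · exact (real_inner_le_norm _ x).trans (by gcongr; exact hD x hx)
    _ = supportFn K y₂ + D * ‖y₁ - y₂‖ := by ring

theorem lipschitzWith_supportFn (hKne : K.Nonempty) (hD : ∀ x ∈ K, ‖x‖ ≤ D) :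
    LipschitzWith (Real.toNNReal D) (supportFn K) :=
  LipschitzWith.of_dist_le' fun y₁ y₂ => by
    rw [Real.dist_eq, dist_eq_norm, abs_sub_le_iff]
    constructor
    · linarith [supportFn_le_add hKne hD y₁ y₂]
    · have := supportFn_le_add hKne hD y₂ y₁
      rw [norm_sub_rev] at this
      linarith

theorem supportFn_zero (hKne : K.Nonempty) : supportFn K 0 = 0 := by
  simp [supportFn, hKne.image_const]

end SupportFunction

section UniformBallMeasure

variable {d : ℕ}

instance : IsProbabilityMeasure (uniformBallMeasure d) := by
  constructor
  rw [uniformBallMeasure, Measure.smul_apply, restrict_apply_univ, smul_eq_mul]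
  exact ENNReal.inv_mul_cancel (measure_closedBall_pos volume 0 one_pos).ne'
    measure_closedBall_lt_top.ne

theorem ae_uniformBallMeasure_mem_closedBall :
    ∀ᵐ v ∂uniformBallMeasure d, v ∈ closedBall (0 : EuclideanSpace ℝ (Fin d)) 1 :=
  ae_smul_measure (ae_restrict_mem measurableSet_closedBall) _

theorem uniformBallMeasure_absolutelyContinuous : uniformBallMeasure d ≪ volume :=
  restrict_le_self.absolutelyContinuous.smul_left _

theorem Continuous.integrable_uniformBallMeasure {F : Type*} [NormedAddCommGroup F]
    {g : EuclideanSpace ℝ (Fin d) → F} (hg : Continuous g) :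
    Integrable g (uniformBallMeasure d) :=
  (hg.continuousOn.integrableOn_compact (isCompact_closedBall 0 1)).smul_measure
    (ENNReal.inv_ne_top.2 (measure_closedBall_pos volume 0 one_pos).ne')

theorem integral_uniformBallMeasure_comp_add_smul {F : Type*} [NormedAddCommGroup F]
    [NormedSpace ℝ F] (g : EuclideanSpace ℝ (Fin d) → F) (y : EuclideanSpace ℝ (Fin d)) {r : ℝ}
    (hr : 0 < r) :
    ∫ v, g (y + r • v) ∂uniformBallMeasure d = ⨍ w in closedBall y r, g w :=
  (setAverage_eq' _ _ _).symm.trans (setAverage_closedBall_comp_add_smul volume g y hr)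

end UniformBallMeasure

section SmoothedSupportFunction

variable {d : ℕ} {K : Set (EuclideanSpace ℝ (Fin d))} {D δ : ℝ}

theorem integrable_supportFn_comp_add_smul (hKne : K.Nonempty) (hD : ∀ x ∈ K, ‖x‖ ≤ D)
    (y : EuclideanSpace ℝ (Fin d)) (c : ℝ) :
    Integrable (fun v => supportFn K (y + c • v)) (uniformBallMeasure d) :=
  ((lipschitzWith_supportFn hKne hD).continuous.comp
    (continuous_const.add (continuous_const_smul c))).integrable_uniformBallMeasure

theorem hasFDerivAt_smoothedSupportFn (hKne : K.Nonempty) (hD : ∀ x ∈ K, ‖x‖ ≤ D) (hδ : 0 < δ)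
    (y : EuclideanSpace ℝ (Fin d)) :
    HasFDerivAt (smoothedSupportFn K δ)
      (⨍ w in closedBall y δ⁻¹, fderiv ℝ (supportFn K) w) y := by
  rw [← integral_uniformBallMeasure_comp_add_smul _ _ (inv_pos.2 hδ)]
  exact (lipschitzWith_supportFn hKne hD).hasFDerivAt_integral_comp_add_smul
    uniformBallMeasure_absolutelyContinuous (inv_ne_zero hδ.ne')
    (integrable_supportFn_comp_add_smul hKne hD y δ⁻¹)

theorem norm_fderiv_smoothedSupportFn_sub_le (hKne : K.Nonempty) (hD : ∀ x ∈ K, ‖x‖ ≤ D)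
    (hδ : 0 < δ) (y₁ y₂ : EuclideanSpace ℝ (Fin d)) :
    ‖fderiv ℝ (smoothedSupportFn K δ) y₁ - fderiv ℝ (smoothedSupportFn K δ) y₂‖ ≤
      δ * d * D * ‖y₁ - y₂‖ := by
  have hD0 : 0 ≤ D := (norm_nonneg _).trans (hD _ hKne.some_mem)
  have hbound : ∀ w, ‖fderiv ℝ (supportFn K) w‖ ≤ D := fun w => by
    simpa [hD0] using norm_fderiv_le_of_lipschitz ℝ (lipschitzWith_supportFn hKne hD) (x₀ := w)
  rw [(hasFDerivAt_smoothedSupportFn hKne hD hδ y₁).fderiv,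
    (hasFDerivAt_smoothedSupportFn hKne hD hδ y₂).fderiv]
  convert norm_setAverage_closedBall_sub_le volume hbound
    (measurable_fderiv ℝ (supportFn K)).aestronglyMeasurable y₁ y₂ (inv_pos.2 hδ) using 1
  rw [finrank_euclideanSpace_fin, dist_eq_norm, div_inv_eq_mul]
  ring

theorem smoothedSupportFn_le_add_inner_gradient (hKne : K.Nonempty) (hD : ∀ x ∈ K, ‖x‖ ≤ D)
    (hδ : 0 < δ) (a b : EuclideanSpace ℝ (Fin d)) :
    smoothedSupportFn K δ b ≤ smoothedSupportFn K δ a +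
      ⟪gradient (smoothedSupportFn K δ) a, b - a⟫ + δ * d * D / 2 * ‖b - a‖ ^ 2 := by
  have := le_add_fderiv_sub_add_sq_of_lipschitz_fderiv
    (fun y => (hasFDerivAt_smoothedSupportFn hKne hD hδ y).differentiableAt)
    (norm_fderiv_smoothedSupportFn_sub_le hKne hD hδ) a b
  rwa [← toDual_gradient, InnerProductSpace.toDual_apply_apply] at this

theorem abs_smoothedSupportFn_sub_supportFn_le (hKne : K.Nonempty) (hD : ∀ x ∈ K, ‖x‖ ≤ D)
    (hδ : 0 < δ) (y : EuclideanSpace ℝ (Fin d)) :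
    |smoothedSupportFn K δ y - supportFn K y| ≤ D / δ := by
  have hD0 : 0 ≤ D := (norm_nonneg _).trans (hD _ hKne.some_mem)
  have hclose : ∀ᵐ v ∂uniformBallMeasure d,
      ‖supportFn K (y + δ⁻¹ • v) - supportFn K y‖ ≤ D / δ := by
    filter_upwards [ae_uniformBallMeasure_mem_closedBall] with v hv
    have hv : ‖δ⁻¹ • v‖ ≤ δ⁻¹ := by
      rw [norm_smul, Real.norm_of_nonneg (inv_nonneg.2 hδ.le)]
      exact mul_le_of_le_one_right (inv_nonneg.2 hδ.le) (mem_closedBall_zero_iff.1 hv)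
    have h₁ := supportFn_le_add hKne hD (y + δ⁻¹ • v) y
    have h₂ := supportFn_le_add hKne hD y (y + δ⁻¹ • v)
    rw [add_sub_cancel_left] at h₁
    rw [sub_add_cancel_left, norm_neg] at h₂
    rw [Real.norm_eq_abs, abs_sub_le_iff, div_eq_mul_inv]
    constructor <;> nlinarith
  have := norm_integral_le_of_norm_le_const hclose
  rwa [integral_sub (integrable_supportFn_comp_add_smul hKne hD y δ⁻¹) (integrable_const _),
    integral_const, probReal_univ, one_smul, mul_one] at this

end SmoothedSupportFunction

theorem expected_FPL_regret_general (d T : ℕ) (K : Set (EuclideanSpace ℝ (Fin d)))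
    (hKne : K.Nonempty)
    (D δ G : ℝ) (hD : ∀ x ∈ K, ‖x‖ ≤ D) (hδ : 0 < δ)
    (f : ℕ → EuclideanSpace ℝ (Fin d) → ℝ)
    (hconv : ∀ t, ConvexOn ℝ Set.univ (f t))
    (hdiff : ∀ t (x : EuclideanSpace ℝ (Fin d)), DifferentiableAt ℝ (f t) x)
    (hG : ∀ t, ∀ x ∈ K, ‖gradient (f t) x‖ ≤ G)
    (x : ℕ → EuclideanSpace ℝ (Fin d))
    (hxK : ∀ t, x t ∈ K)
    (hx : ∀ t, x t = gradient (smoothedSupportFn K δ)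
      (-(∑ s ∈ Finset.range t, gradient (f s) (x s)))) :
    ∀ z ∈ K, ∑ t ∈ Finset.range T, f t (x t) - ∑ t ∈ Finset.range T, f t z ≤
      2 * D / δ + (δ * d * D / 2) * G ^ 2 * T := by
  intro z hz
  have hlinear := sum_inner_gradient_sub_le_of_descent
    (smoothedSupportFn_le_add_inner_gradient hKne hD hδ) (fun t => gradient (f t) (x t)) z T
  simp only [← hx] at hlinear
  have hconvex : ∀ t, f t (x t) - f t z ≤ ⟪gradient (f t) (x t), x t - z⟫ := fun t => by
    have := (hconv t).add_fderiv_sub_le (hdiff t (x t)) z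
    rw [← toDual_gradient, InnerProductSpace.toDual_apply_apply, inner_sub_right] at this
    rw [inner_sub_right]
    linarith
  have hgrad : ∑ t ∈ Finset.range T, ‖gradient (f t) (x t)‖ ^ 2 ≤ T * G ^ 2 :=
    (Finset.sum_le_sum fun t _ => pow_le_pow_left₀ (norm_nonneg _) (hG t _ (hxK t)) 2).trans_eq
      (by simp)
  have hstart := abs_smoothedSupportFn_sub_supportFn_le hKne hD hδ 0
  have hend := abs_smoothedSupportFn_sub_supportFn_le hKne hD hδ
    (-∑ t ∈ Finset.range T, gradient (f t) (x t))
  have hcomparator := inner_le_supportFn hD hz (-∑ t ∈ Finset.range T, gradient (f t) (x t))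
  have hL : 0 ≤ δ * d * D / 2 := by
    have := (norm_nonneg _).trans (hD _ hz); positivity
  rw [supportFn_zero hKne, sub_zero, abs_le] at hstart
  rw [abs_le] at hend
  rw [inner_neg_left] at hcomparator
  calc _ = ∑ t ∈ Finset.range T, (f t (x t) - f t z) := (Finset.sum_sub_distrib _ _).symm
    _ ≤ ∑ t ∈ Finset.range T, ⟪gradient (f t) (x t), x t - z⟫ :=
      Finset.sum_le_sum fun t _ => hconvex t
    _ ≤ _ := hlinear
    _ ≤ D / δ + D / δ + δ * d * D / 2 * (T * G ^ 2) := by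
      linarith [hstart.2, hend.1, mul_le_mul_of_nonneg_left hgrad hL]
    _ = 2 * D / δ + (δ * d * D / 2) * G ^ 2 * T := by ring

/-- Regret of expected Follow-the-Perturbed-Leader. If the iterates satisfy
`x_t = ∇h_δ^*(− Σ_{s<t} ∇f_s(x_s))`, then the regret is at most `2D/δ + (δ d D/2) G² T`. -/
theorem expected_FPL_regret (d T : ℕ) (K : Set (EuclideanSpace ℝ (Fin d)))
    (hKne : K.Nonempty) (hKconv : Convex ℝ K) (hKcomp : IsCompact K)
    (D δ G : ℝ) (hD : ∀ x ∈ K, ‖x‖ ≤ D) (hδ : 0 < δ)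
    (f : ℕ → EuclideanSpace ℝ (Fin d) → ℝ)
    (hconv : ∀ t, ConvexOn ℝ Set.univ (f t))
    (hdiff : ∀ t (x : EuclideanSpace ℝ (Fin d)), DifferentiableAt ℝ (f t) x)
    (hG : ∀ t, ∀ x ∈ K, ‖gradient (f t) x‖ ≤ G)
    (x : ℕ → EuclideanSpace ℝ (Fin d))
    (hxK : ∀ t, x t ∈ K)
    (hx : ∀ t, x t = gradient (smoothedSupportFn K δ)
      (-(∑ s ∈ Finset.range t, gradient (f s) (x s)))) :
    ∀ z ∈ K, ∑ t ∈ Finset.range T, f t (x t) - ∑ t ∈ Finset.range T, f t z ≤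
      2 * D / δ + (δ * d * D / 2) * G ^ 2 * T :=
  expected_FPL_regret_general d T K hKne D δ G hD hδ f hconv hdiff hG x hxK hx
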